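/- Let (S, A, T, γ) be a finite MDP with γ ∈ [0,1] and horizon T_h ≥ 1, let φ : S × A → ℝ^d be a feature map, and for θ ∈ ℝ^d consider the linear reward r_θ(s,a) = θᵀφ(s,a) with soft value iteration quantities Q_{θ,t}, V_{θ,t} and soft-VI policy π_{θ,t}(a|s) = exp(Q_{θ,t}(s,a) − V_{θ,t}(s)). Then for each 0 ≤ t ≤ T_h−1 and each s ∈ S, the map θ ↦ V_{θ,t}(s) is differentiable on ℝ^d and its gradient equals the discounted expected feature counts under the soft-VI policy: ∇_θ V_{θ,t}(s) = E_{π_θ}[ Σ_{t'=t}^{T_h−1} γ^{t'−t} φ(S_{t'}, A_{t'}) | S_t = s ]. -/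

import Mathlib

/-
The gradient of a log-sum-exp is the softmax-weighted average of the gradients of its
terms, and the soft-VI policy is exactly that softmax. Hence, by the chain rule, the gradients
of `Q_θ` and `V_θ` satisfy the backward recursion `∇Q = φ + γ E_{s'}[∇V(s')]`,
`∇V = E_{a ~ π_θ}[∇Q]`, which is the one-step unrolling of the discounted feature expectation.
-/

open scoped RealInnerProductSpace

/-- Soft value iteration, indexed by the number of remaining steps after the current one:
`softQ T γ r k = Q_{Th-1-k}` when the horizon is `Th`.  Thus `softQ T γ r 0 s a = r s a`
(the last step `t = Th-1`) and
`softQ T γ r (k+1) s a = r s a + γ ∑_{s'} T(s'|s,a) V(k, s')`. -/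
noncomputable def softQ {S A : Type*} [Fintype S] [Fintype A]
    (T : S → A → S → ℝ) (γ : ℝ) (r : S → A → ℝ) : ℕ → S → A → ℝ
  | 0 => fun s a => r s a
  | k + 1 => fun s a =>
      r s a + γ * ∑ s', T s a s' * Real.log (∑ a', Real.exp (softQ T γ r k s' a'))

/-- Soft state-value: `V(s) = log ∑_a exp Q(s,a)` (indexed by remaining steps). -/
noncomputable def softV {S A : Type*} [Fintype S] [Fintype A]
    (T : S → A → S → ℝ) (γ : ℝ) (r : S → A → ℝ) (k : ℕ) (s : S) : ℝ :=
  Real.log (∑ a, Real.exp (softQ T γ r k s a))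

/-- `expSumV T π φ t k s` is the (vector-valued) expectation
`E_π[ ∑_{t'=t}^{t+k-1} φ t' S_{t'} A_{t'} | S_t = s ]` over trajectories generated from
state `s` at time `t` by the time-dependent policy `π` and transitions `T`. -/
noncomputable def expSumV {S A : Type*} [Fintype S] [Fintype A] {d : ℕ}
    (T : S → A → S → ℝ) (π : ℕ → S → A → ℝ)
    (φ : ℕ → S → A → EuclideanSpace ℝ (Fin d)) : ℕ → ℕ → S → EuclideanSpace ℝ (Fin d)
  | _, 0, _ => 0
  | t, k + 1, s => ∑ a, π t s a • (φ t s a + ∑ s', T s a s' • expSumV T π φ (t + 1) k s')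

section Gradient

variable {F : Type*} [NormedAddCommGroup F] [InnerProductSpace ℝ F] [CompleteSpace F]
  {f g : F → ℝ} {f' g' x : F}

theorem hasGradientAt_inner_left (v : F) : HasGradientAt (fun y => ⟪y, v⟫) v x := by
  have h : (fun y => ⟪y, v⟫) = InnerProductSpace.toDual ℝ F v := by
    ext y
    rw [InnerProductSpace.toDual_apply_apply, real_inner_comm]
  rw [hasGradientAt_iff_hasFDerivAt, h]
  exact (InnerProductSpace.toDual ℝ F v).hasFDerivAt

theorem HasGradientAt.add (hf : HasGradientAt f f' x) (hg : HasGradientAt g g' x) :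
    HasGradientAt (fun y => f y + g y) (f' + g') x := by
  rw [hasGradientAt_iff_hasFDerivAt, map_add]
  exact hf.hasFDerivAt.add hg.hasFDerivAt

theorem HasGradientAt.const_mul (c : ℝ) (hf : HasGradientAt f f' x) :
    HasGradientAt (fun y => c * f y) (c • f') x := by
  rw [hasGradientAt_iff_hasFDerivAt, map_smul]
  exact hf.hasFDerivAt.const_mul c

variable {ι : Type*} [Fintype ι] {u : ι → F → ℝ} {u' : ι → F}

theorem HasGradientAt.fun_sum (hu : ∀ i, HasGradientAt (u i) (u' i) x) :
    HasGradientAt (fun y => ∑ i, u i y) (∑ i, u' i) x := by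
  rw [hasGradientAt_iff_hasFDerivAt, map_sum]
  exact HasFDerivAt.fun_sum fun i _ => (hu i).hasFDerivAt

theorem HasGradientAt.log_sum_exp [Nonempty ι] (hu : ∀ i, HasGradientAt (u i) (u' i) x) :
    HasGradientAt (fun y => Real.log (∑ i, Real.exp (u i y)))
      (∑ i, Real.exp (u i x - Real.log (∑ j, Real.exp (u j x))) • u' i) x := by
  have hZ : 0 < ∑ j, Real.exp (u j x) :=
    Finset.sum_pos (fun j _ => Real.exp_pos _) Finset.univ_nonempty
  have hsum : HasFDerivAt (fun y => ∑ i, Real.exp (u i y))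
      (∑ i, Real.exp (u i x) • InnerProductSpace.toDual ℝ F (u' i)) x :=
    HasFDerivAt.fun_sum fun i _ => (hu i).hasFDerivAt.exp
  have hsoftmax : InnerProductSpace.toDual ℝ F
        (∑ i, Real.exp (u i x - Real.log (∑ j, Real.exp (u j x))) • u' i)
      = (∑ j, Real.exp (u j x))⁻¹ •
          ∑ i, Real.exp (u i x) • InnerProductSpace.toDual ℝ F (u' i) := by
    simp only [map_sum, map_smul, Real.exp_sub, Real.exp_log hZ, Finset.smul_sum, smul_smul,
      div_eq_inv_mul]
  rw [hasGradientAt_iff_hasFDerivAt, hsoftmax]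
  exact hsum.log hZ.ne'

end Gradient

section SoftValueIteration

variable {S A : Type*} [Fintype S] [Fintype A] (T : S → A → S → ℝ) (γ : ℝ)

noncomputable def softPolicy (r : S → A → ℝ) (k : ℕ) (s : S) (a : A) : ℝ :=
  Real.exp (softQ T γ r k s a - softV T γ r k s)

/-- The gradient of `softQ` with respect to the reward parameters, when `ψ` is the gradient
of the reward. -/
noncomputable def softQGrad {E : Type*} [AddCommGroup E] [Module ℝ E] (r : S → A → ℝ)
    (ψ : S → A → E) : ℕ → S → A → E
  | 0 => ψ
  | k + 1 => fun s a =>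
      ψ s a + γ • ∑ s', T s a s' • ∑ a', softPolicy T γ r k s' a' • softQGrad r ψ k s' a'

noncomputable def softVGrad {E : Type*} [AddCommGroup E] [Module ℝ E] (r : S → A → ℝ)
    (ψ : S → A → E) (k : ℕ) (s : S) : E :=
  ∑ a, softPolicy T γ r k s a • softQGrad T γ r ψ k s a

theorem softQGrad_succ {E : Type*} [AddCommGroup E] [Module ℝ E] (r : S → A → ℝ)
    (ψ : S → A → E) (k : ℕ) (s : S) (a : A) :
    softQGrad T γ r ψ (k + 1) s a = ψ s a + γ • ∑ s', T s a s' • softVGrad T γ r ψ k s' :=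
  rfl

section Differentiability

variable [Nonempty A] {F : Type*} [NormedAddCommGroup F] [InnerProductSpace ℝ F]
  [CompleteSpace F] {r : F → S → A → ℝ} {ψ : S → A → F} {θ : F}

theorem hasGradientAt_softV_of_softQ {k : ℕ}
    (hQ : ∀ s a, HasGradientAt (fun θ' => softQ T γ (r θ') k s a)
      (softQGrad T γ (r θ) ψ k s a) θ) (s : S) :
    HasGradientAt (fun θ' => softV T γ (r θ') k s) (softVGrad T γ (r θ) ψ k s) θ :=
  HasGradientAt.log_sum_exp (hQ s)

theorem hasGradientAt_softQ (hr : ∀ s a, HasGradientAt (fun θ' => r θ' s a) (ψ s a) θ)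
    (k : ℕ) (s : S) (a : A) :
    HasGradientAt (fun θ' => softQ T γ (r θ') k s a) (softQGrad T γ (r θ) ψ k s a) θ := by
  induction k generalizing s a with
  | zero => exact hr s a
  | succ k ih =>
    have hV := hasGradientAt_softV_of_softQ T γ ih
    exact (hr s a).add
      ((HasGradientAt.fun_sum fun s' => (hV s').const_mul (T s a s')).const_mul γ)

theorem hasGradientAt_softV (hr : ∀ s a, HasGradientAt (fun θ' => r θ' s a) (ψ s a) θ)
    (k : ℕ) (s : S) :
    HasGradientAt (fun θ' => softV T γ (r θ') k s) (softVGrad T γ (r θ) ψ k s) θ :=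
  hasGradientAt_softV_of_softQ T γ (hasGradientAt_softQ T γ hr k) s

end Differentiability

/-- The offset `m` keeps the exponent `t' + m - t` free of truncated subtraction when the
start time moves from `t` to `t + 1` in the induction. -/
theorem expSumV_softPolicy_eq_softVGrad {d : ℕ} (r : S → A → ℝ)
    (φ : S → A → EuclideanSpace ℝ (Fin d)) (Th : ℕ) (k t m : ℕ) (s : S)
    (hk : t + k + 1 = Th) :
    expSumV T (fun t' => softPolicy T γ r (Th - 1 - t'))
        (fun t' s' a => γ ^ (t' + m - t) • φ s' a) t (k + 1) s
      = γ ^ m • softVGrad T γ r φ k s := by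
  induction k generalizing t m s with
  | zero =>
    have h0 : Th - 1 - t = 0 := by omega
    simp only [expSumV, smul_zero, Finset.sum_const_zero, add_zero, h0, Nat.add_sub_cancel_left,
      softVGrad, softQGrad, Finset.smul_sum]
    exact Finset.sum_congr rfl fun a _ => smul_comm _ _ _
  | succ k ih =>
    have hshift : (fun t' s' a => γ ^ (t' + m - t) • φ s' a)
        = fun t' s' a => γ ^ (t' + (m + 1) - (t + 1)) • φ s' a := by
      funext t' s' a
      congr 2
      omega
    have hk' : Th - 1 - t = k + 1 := by omega
    have hdisc : ∀ a, ∑ s', T s a s' • γ ^ (m + 1) • softVGrad T γ r φ k s'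
        = γ ^ m • γ • ∑ s', T s a s' • softVGrad T γ r φ k s' := fun a => by
      simp only [Finset.smul_sum]
      exact Finset.sum_congr rfl fun s' _ => by module
    rw [expSumV, hshift, softVGrad, Finset.smul_sum]
    simp only [ih (t + 1) (m + 1) _ (by omega), hk', softQGrad_succ, Nat.add_sub_cancel_left,
      hdisc]
    exact Finset.sum_congr rfl fun a _ => by module

end SoftValueIteration

theorem stmt2_general {S A : Type*} [Fintype S] [Fintype A] [Nonempty A] {d : ℕ}
    (T : S → A → S → ℝ)
    (γ : ℝ)
    (Th : ℕ) (hTh : 1 ≤ Th)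
    (φ : S → A → EuclideanSpace ℝ (Fin d))
    (t : ℕ) (ht : t ≤ Th - 1) (s : S) (θ : EuclideanSpace ℝ (Fin d)) :
    -- `θ' ↦ V_{θ',t}(s)` is differentiable at `θ` with gradient equal to the discounted
    -- expected feature counts from time `t` to `Th-1` under the soft-VI policy `π_θ`.
    HasGradientAt
      (fun θ' : EuclideanSpace ℝ (Fin d) =>
        softV T γ (fun s a => ⟪θ', φ s a⟫) (Th - 1 - t) s)
      (expSumV T
        (fun t' s' a => Real.exp (softQ T γ (fun s a => ⟪θ, φ s a⟫) (Th - 1 - t') s' a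
            - softV T γ (fun s a => ⟪θ, φ s a⟫) (Th - 1 - t') s'))
        (fun t' s' a => γ ^ (t' - t) • φ s' a) t (Th - t) s)
      θ := by
  have hfeat := expSumV_softPolicy_eq_softVGrad T γ (fun s a => ⟪θ, φ s a⟫) φ Th
    (Th - 1 - t) t 0 s (by omega)
  simp only [add_zero, pow_zero, one_smul] at hfeat
  rw [show Th - t = Th - 1 - t + 1 by omega]
  exact hfeat ▸ hasGradientAt_softV T γ (fun s a => hasGradientAt_inner_left (φ s a)) _ s

theorem stmt2 {S A : Type*} [Fintype S] [Fintype A] [Nonempty S] [Nonempty A] {d : ℕ}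
    (T : S → A → S → ℝ)
    (hT0 : ∀ s a s', 0 ≤ T s a s') (hT1 : ∀ s a, ∑ s', T s a s' = 1)
    (γ : ℝ) (hγ : γ ∈ Set.Icc (0 : ℝ) 1)
    (Th : ℕ) (hTh : 1 ≤ Th)
    (φ : S → A → EuclideanSpace ℝ (Fin d))
    (t : ℕ) (ht : t ≤ Th - 1) (s : S) (θ : EuclideanSpace ℝ (Fin d)) :
    -- `θ' ↦ V_{θ',t}(s)` is differentiable at `θ` with gradient equal to the discounted
    -- expected feature counts from time `t` to `Th-1` under the soft-VI policy `π_θ`.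
    HasGradientAt
      (fun θ' : EuclideanSpace ℝ (Fin d) =>
        softV T γ (fun s a => ⟪θ', φ s a⟫) (Th - 1 - t) s)
      (expSumV T
        (fun t' s' a => Real.exp (softQ T γ (fun s a => ⟪θ, φ s a⟫) (Th - 1 - t') s' a
            - softV T γ (fun s a => ⟪θ, φ s a⟫) (Th - 1 - t') s'))
        (fun t' s' a => γ ^ (t' - t) • φ s' a) t (Th - t) s)
      θ :=
  stmt2_general T γ Th hTh φ t ht s θ
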